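/- arXiv:2208.04593 — 2 statements merged into one kernel-verified Lean document; each statement's English description precedes it below -/
import Mathlib

section
/- Let F and F_i be n×n symmetric positive definite real matrices. Then the block matrix [[F, I],[I, F_i]] is positive semidefinite and trace(F·F_i) = n if and only if the block matrix is positive semidefinite and F·F_i = I. -/
/-!
By the Schur complement, positive semidefiniteness of `[[F, I], [I, Fᵢ]]` means `Fᵢ - F⁻¹ ⪰ 0`.
Since `F * Fᵢ = F * (Fᵢ - F⁻¹) + I`, the condition `trace (F * Fᵢ) = n` says that
`F * (Fᵢ - F⁻¹)` has trace zero. Writing `F = S * S` with `S = √F` invertible, this trace is the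
trace of the positive semidefinite matrix `S * (Fᵢ - F⁻¹) * S`, which therefore vanishes, so
`Fᵢ = F⁻¹`.
-/

open Matrix

section

open scoped MatrixOrder ComplexOrder

variable {𝕜 n : Type*} [RCLike 𝕜] [Fintype n] [DecidableEq n]

theorem Matrix.PosDef.trace_mul_eq_zero_iff {A B : Matrix n n 𝕜} (hA : A.PosDef)
    (hB : B.PosSemidef) : (A * B).trace = 0 ↔ B = 0 := by
  refine ⟨fun h => ?_, fun h => by rw [h, mul_zero, trace_zero]⟩
  set S := CFC.sqrt A
  have hSS : S * S = A := CFC.sqrt_mul_sqrt_self A hA.posSemidef.nonneg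
  have hSH : Sᴴ = S := (CFC.sqrt_nonneg A).posSemidef.1
  have hS : IsUnit S := isUnit_of_mul_isUnit_left (hSS.symm ▸ hA.isUnit)
  have hconj : (S * B * Sᴴ).trace = 0 := by
    rwa [hSH, trace_mul_comm, ← mul_assoc, hSS]
  have hconj_zero := (hB.mul_mul_conjTranspose_same S).trace_eq_zero_iff.mp hconj
  rwa [hSH, hS.mul_left_eq_zero, hS.mul_right_eq_zero] at hconj_zero

theorem Matrix.posSemidef_fromBlocks_one_one_iff {A D : Matrix n n 𝕜} (hA : A.PosDef) :
    (fromBlocks A 1 1 D).PosSemidef ↔ (D - A⁻¹).PosSemidef := by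
  have : Invertible A := hA.isUnit.invertible
  simpa using PosDef.fromBlocks₁₁ (1 : Matrix n n 𝕜) D hA

theorem Matrix.PosDef.trace_mul_eq_card_iff {A D : Matrix n n 𝕜} (hA : A.PosDef)
    (hD : (D - A⁻¹).PosSemidef) : (A * D).trace = Fintype.card n ↔ A * D = 1 := by
  have hAinv : A * A⁻¹ = 1 := mul_nonsing_inv A ((isUnit_iff_isUnit_det A).mp hA.isUnit)
  have hsplit : A * D = A * (D - A⁻¹) + 1 := by rw [mul_sub, hAinv, sub_add_cancel]
  rw [hsplit, trace_add, trace_one, add_eq_right, add_eq_right, hA.trace_mul_eq_zero_iff hD,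
    hA.isUnit.mul_right_eq_zero]

end

theorem stmt1_general (n : ℕ) (F Fi : Matrix (Fin n) (Fin n) ℝ)
    (hF : F.PosDef) :
    ((Matrix.fromBlocks F 1 1 Fi).PosSemidef ∧ (F * Fi).trace = (n : ℝ)) ↔
      ((Matrix.fromBlocks F 1 1 Fi).PosSemidef ∧ F * Fi = 1) := by
  rw [posSemidef_fromBlocks_one_one_iff hF]
  refine and_congr_right fun hSchur => ?_
  simpa using hF.trace_mul_eq_card_iff hSchur

theorem stmt1 (n : ℕ) (F Fi : Matrix (Fin n) (Fin n) ℝ)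
    (hF : F.PosDef) (hFi : Fi.PosDef) :
    ((Matrix.fromBlocks F 1 1 Fi).PosSemidef ∧ (F * Fi).trace = (n : ℝ)) ↔
      ((Matrix.fromBlocks F 1 1 Fi).PosSemidef ∧ F * Fi = 1) :=
  stmt1_general n F Fi hF
end

section
/- Let X, Y, U, V ∈ ℝ^{n×n} with V nonsingular and XY + UV^⊤ = I. Define P₁ = [[X, U],[U^⊤, -V⁻¹(Y - YXY)V^{-⊤}]] and Φ = [[Y, I],[V^⊤, 0]]. Then Φ^⊤ P₁ Φ = [[Y, I],[I, X]]. -/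
open Matrix

theorem stmt14 (n : ℕ) (X Y U V : Matrix (Fin n) (Fin n) ℝ)
    (hX : X.IsSymm) (hY : Y.IsSymm) (hV : IsUnit V.det)
    (hId : X * Y + U * Vᵀ = 1) :
    (Matrix.fromBlocks Y 1 Vᵀ 0)ᵀ *
        Matrix.fromBlocks X U Uᵀ (-(V⁻¹ * (Y - Y * X * Y) * (Vᵀ)⁻¹)) *
        Matrix.fromBlocks Y 1 Vᵀ 0 = Matrix.fromBlocks Y 1 1 X := by
  have hVT : IsUnit Vᵀ.det := by rwa [Matrix.det_transpose]
  have hVinv : V * V⁻¹ = 1 := Matrix.mul_nonsing_inv V hV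
  have hVTinv : (Vᵀ)⁻¹ * Vᵀ = 1 := Matrix.nonsing_inv_mul Vᵀ hVT
  have hId2 : Y * X + V * Uᵀ = 1 := by
    have := congrArg Matrix.transpose hId
    simpa [Matrix.transpose_add, Matrix.transpose_mul, hX.eq, hY.eq] using this
  rw [Matrix.fromBlocks_transpose, Matrix.fromBlocks_multiply, Matrix.fromBlocks_multiply]
  simp only [Matrix.transpose_transpose, Matrix.transpose_one, Matrix.transpose_zero, hY.eq,
    Matrix.one_mul, Matrix.mul_one, Matrix.zero_mul, Matrix.mul_zero, add_zero, zero_add]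
  have hM : V * -(V⁻¹ * (Y - Y * X * Y) * (Vᵀ)⁻¹) * Vᵀ = -(Y - Y * X * Y) := by
    calc V * -(V⁻¹ * (Y - Y * X * Y) * (Vᵀ)⁻¹) * Vᵀ
        = -((V * V⁻¹) * (Y - Y * X * Y) * ((Vᵀ)⁻¹ * Vᵀ)) := by noncomm_ring
      _ = -(Y - Y * X * Y) := by rw [hVinv, hVTinv]; simp
  have e1 : (Y * X + V * Uᵀ) * Y + (Y * U + V * -(V⁻¹ * (Y - Y * X * Y) * (Vᵀ)⁻¹)) * Vᵀ = Y := by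
    have expand : (Y * X + V * Uᵀ) * Y + (Y * U + V * -(V⁻¹ * (Y - Y * X * Y) * (Vᵀ)⁻¹)) * Vᵀ
        = (Y * X + V * Uᵀ) * Y + Y * (U * Vᵀ) + V * -(V⁻¹ * (Y - Y * X * Y) * (Vᵀ)⁻¹) * Vᵀ := by
      noncomm_ring
    rw [expand, hId2, hM]
    have : Y * (U * Vᵀ) = Y * (1 - X * Y) := by
      congr 1
      rw [eq_sub_iff_add_eq, add_comm]; exact hId
    rw [this]; noncomm_ring
  have e2 : Y * X + V * Uᵀ = 1 := hId2
  have e3 : X * Y + U * Vᵀ = 1 := hId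
  rw [e1, e2, e3]
end
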